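/- Let I = (x_i : i ∈ I) and J = (x_j : j ∈ J) be two coordinate ideals in K[x_1,...,x_n] whose index sets satisfy: I ∩ J ≠ ∅, I ⊄ J, and J ⊄ I. Then the Newton polyhedron of I·J has a vertex whose ideal tangent cone is not simplicial (it has more than n minimal generators). Concretely, if 1 ∈ I\J, 2 ∈ J\I, and c ∈ I∩J, then e_1 + e_2 is a vertex and both e_c - e_1 and e_c - e_2 are minimal generators of IT_{e_1+e_2}. -/

import Mathlib

/-!
Everything is certified by one weight vector `w = 2·𝟙 - e_p - e_q`. On the cloud,
`⟨w, e_i + e_j⟩ = w_i + w_j ≥ 2` with equality only for `(i, j) = (p, q)`, because `p ∉ J` and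
`q ∉ I`; as the weights are integers, every other cloud point has weight `≥ 3`. Since `w > 0`,
the functional `⟨w, ·⟩` attains its minimum over `C + ℝ≥0ⁿ` only at `v = e_p + e_q`, so `v` is a
vertex. Every generator of `IT_v` has weight `≥ 1` (`w_k ≥ 1`, and `⟨w, x - v⟩ ≥ 3 - 2`), while
`e_c - e_p` and `e_c - e_q` have weight `2 - 1 = 1`, so neither is a sum of two nonzero elements.
-/

open Pointwise

section Convex

variable {𝕜 E : Type*} [Field 𝕜] [LinearOrder 𝕜] [IsStrictOrderedRing 𝕜]
  [AddCommGroup E] [Module 𝕜 E]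

theorem mem_extremePoints_convexHull_of_forall_lt (ℓ : E →ₗ[𝕜] 𝕜) {A : Set E} {x : E}
    (hx : x ∈ A) (hlt : ∀ y ∈ A, y ≠ x → ℓ x < ℓ y) :
    x ∈ (convexHull 𝕜 A).extremePoints 𝕜 := by
  set T : Set E := {y | y = x ∨ ℓ x < ℓ y}
  have hT : Convex 𝕜 T := by
    refine convex_iff_forall_pos.2 fun y hy z hz a b ha hb hab => ?_
    by_cases hyz : y = x ∧ z = x
    · exact .inl (by rw [hyz.1, hyz.2, Convex.combo_self hab])
    have hle : ∀ u ∈ T, ℓ x ≤ ℓ u := fun u hu => hu.elim (fun h => (congrArg ℓ h).ge) le_of_lt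
    have hlt' : ℓ x < ℓ y ∨ ℓ x < ℓ z := by
      rcases hy with hy | hy
      · exact .inr (hz.resolve_left fun hz => hyz ⟨hy, hz⟩)
      · exact .inl hy
    right
    calc ℓ x = a * ℓ x + b * ℓ x := by rw [← add_mul, hab, one_mul]
      _ < a * ℓ y + b * ℓ z := by
        rcases hlt' with h | h
        · exact add_lt_add_of_lt_of_le (mul_lt_mul_of_pos_left h ha)
            (mul_le_mul_of_nonneg_left (hle z hz) hb.le)
        · exact add_lt_add_of_le_of_lt (mul_le_mul_of_nonneg_left (hle y hy) ha.le)
            (mul_lt_mul_of_pos_left h hb)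
      _ = ℓ (a • y + b • z) := by simp only [map_add, map_smul, smul_eq_mul]
  have hTx : T \ {x} = {y | ℓ x < ℓ y} := by
    ext y
    simp only [T, Set.mem_sdiff, Set.mem_ofPred_eq, Set.mem_singleton_iff]
    exact ⟨fun h => h.1.resolve_left h.2, fun h => ⟨.inr h, by rintro rfl; exact lt_irrefl _ h⟩⟩
  have hxT : x ∈ T.extremePoints 𝕜 :=
    hT.mem_extremePoints_iff_convex_sdiff.2 ⟨.inl rfl, hTx ▸ convex_halfSpace_gt ℓ.isLinear _⟩
  have hAT : convexHull 𝕜 A ⊆ T :=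
    convexHull_min (fun y hy => (eq_or_ne y x).imp_right (hlt y hy)) hT
  exact inter_extremePoints_subset_extremePoints_of_subset hAT ⟨subset_convexHull 𝕜 A hx, hxT⟩

end Convex

theorem AddSubmonoid.eq_zero_or_one_le_of_mem_closure {M : Type*} [AddCommMonoid M]
    {S : Set M} (μ : M →+ ℤ) (hS : ∀ g ∈ S, 1 ≤ μ g) {z : M} (hz : z ∈ closure S) :
    z = 0 ∨ 1 ≤ μ z := by
  induction hz using AddSubmonoid.closure_induction with
  | mem g hg => exact .inr (hS g hg)
  | zero => exact .inl rfl
  | add x y _ _ hx hy =>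
    rcases hx with rfl | hx
    · rwa [zero_add]
    rcases hy with rfl | hy
    · rw [add_zero]; exact .inr hx
    · exact .inr (by rw [map_add]; omega)

theorem AddSubmonoid.eq_zero_or_eq_zero_of_map_add_eq_one {M : Type*} [AddCommMonoid M]
    {S : Set M} (μ : M →+ ℤ) (hS : ∀ g ∈ S, 1 ≤ μ g) {x y : M} (hx : x ∈ closure S)
    (hy : y ∈ closure S) (h : μ (x + y) = 1) : x = 0 ∨ y = 0 := by
  rcases eq_zero_or_one_le_of_mem_closure μ hS hx with hx | hx
  · exact .inl hx
  rcases eq_zero_or_one_le_of_mem_closure μ hS hy with hy | hy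
  · exact .inr hy
  rw [map_add] at h
  omega

theorem Fintype.linearCombination_pos {ι : Type*} [Fintype ι] {w r : ι → ℝ}
    (hw : ∀ k, 0 < w k) (hr : ∀ k, 0 ≤ r k) (hr0 : r ≠ 0) :
    0 < Fintype.linearCombination ℝ w r := by
  obtain ⟨k, hk⟩ := Function.ne_iff.1 hr0
  rw [Fintype.linearCombination_apply]
  exact Finset.sum_pos' (fun k _ => smul_nonneg (hr k) (hw k).le)
    ⟨k, Finset.mem_univ k, smul_pos ((hr k).lt_of_ne (Ne.symm hk)) (hw k)⟩

theorem Fintype.linearCombination_nonneg {ι : Type*} [Fintype ι] {w r : ι → ℝ}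
    (hw : ∀ k, 0 ≤ w k) (hr : ∀ k, 0 ≤ r k) :
    0 ≤ Fintype.linearCombination ℝ w r := by
  rw [Fintype.linearCombination_apply]
  exact Finset.sum_nonneg fun k _ => smul_nonneg (hr k) (hw k)

theorem Fintype.linearCombination_intCast {ι : Type*} [Fintype ι] (w x : ι → ℤ) :
    Fintype.linearCombination ℝ (fun k => (w k : ℝ)) (fun k => (x k : ℝ)) =
      (Fintype.linearCombination ℤ w x : ℝ) := by
  simp [Fintype.linearCombination_apply]

section ProductIdeal

variable {ι : Type*} [DecidableEq ι]

def productCloud (I J : Finset ι) : Set (ι → ℤ) :=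
  {x | ∃ i ∈ I, ∃ j ∈ J, x = Pi.single i 1 + Pi.single j 1}

def newtonPolyhedron (C : Set (ι → ℤ)) : Set (ι → ℝ) :=
  convexHull ℝ ((fun (x : ι → ℤ) (i : ι) => (x i : ℝ)) '' C + {x | ∀ i, 0 ≤ x i})

def tangentGenerators (C : Set (ι → ℤ)) (v : ι → ℤ) : Set (ι → ℤ) :=
  {w | ∃ x ∈ C, x ≠ v ∧ w = x - v} ∪ Set.range fun i => Pi.single i 1

def idealTangentCone (C : Set (ι → ℤ)) (v : ι → ℤ) : AddSubmonoid (ι → ℤ) :=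
  AddSubmonoid.closure (tangentGenerators C v)

theorem sub_mem_idealTangentCone {C : Set (ι → ℤ)} {v x : ι → ℤ} (hx : x ∈ C) (hxv : x ≠ v) :
    x - v ∈ idealTangentCone C v :=
  AddSubmonoid.subset_closure (.inl ⟨x, hx, hxv, rfl⟩)

def vertexWeight (p q k : ι) : ℤ :=
  if k = p ∨ k = q then 1 else 2

variable {p q : ι}

theorem one_le_vertexWeight (k : ι) : 1 ≤ vertexWeight p q k := by
  unfold vertexWeight; split_ifs <;> omega

variable [Fintype ι]

theorem linearCombination_vertexWeight_single_add_single (i j : ι) :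
    Fintype.linearCombination ℤ (vertexWeight p q) (Pi.single i 1 + Pi.single j 1) =
      vertexWeight p q i + vertexWeight p q j := by
  simp [Fintype.linearCombination_apply_single]

variable {I J : Finset ι}

theorem three_le_linearCombination_vertexWeight (hpJ : p ∉ J) (hqI : q ∉ I) {x : ι → ℤ}
    (hx : x ∈ productCloud I J) (hxv : x ≠ Pi.single p 1 + Pi.single q 1) :
    3 ≤ Fintype.linearCombination ℤ (vertexWeight p q) x := by
  obtain ⟨i, hi, j, hj, rfl⟩ := hx
  have hiq : i ≠ q := by rintro rfl; exact hqI hi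
  have hjp : j ≠ p := by rintro rfl; exact hpJ hj
  have hij : ¬(i = p ∧ j = q) := by rintro ⟨rfl, rfl⟩; exact hxv rfl
  rw [linearCombination_vertexWeight_single_add_single]
  unfold vertexWeight
  split_ifs <;> tauto

theorem linearCombination_vertexWeight_vertex :
    Fintype.linearCombination ℤ (vertexWeight p q) (Pi.single p 1 + Pi.single q 1) = 2 := by
  simp [linearCombination_vertexWeight_single_add_single, vertexWeight]

theorem vertex_mem_extremePoints_newtonPolyhedron (hpI : p ∈ I) (hqJ : q ∈ J) (hpJ : p ∉ J)
    (hqI : q ∉ I) :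
    (fun i => ((Pi.single p 1 + Pi.single q 1 : ι → ℤ) i : ℝ)) ∈
      (newtonPolyhedron (productCloud I J)).extremePoints ℝ := by
  set v : ι → ℤ := Pi.single p 1 + Pi.single q 1
  have hv : Fintype.linearCombination ℤ (vertexWeight p q) v = 2 :=
    linearCombination_vertexWeight_vertex
  have hw k : (0 : ℝ) < vertexWeight p q k := by exact_mod_cast one_le_vertexWeight k
  refine mem_extremePoints_convexHull_of_forall_lt
    (Fintype.linearCombination ℝ fun k => (vertexWeight p q k : ℝ))
    ⟨_, ⟨v, ⟨p, hpI, q, hqJ, rfl⟩, rfl⟩, 0, fun _ => le_rfl, add_zero _⟩ ?_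
  rintro _ ⟨_, ⟨x, hx, rfl⟩, r, hr, rfl⟩ hne
  simp only [map_add, Fintype.linearCombination_intCast, hv]
  by_cases hxv : x = v
  · subst hxv
    have hr0 : r ≠ 0 := by rintro rfl; exact hne (add_zero _)
    have := Fintype.linearCombination_pos hw hr hr0
    rw [hv]; push_cast; linarith
  · have h3 : (3 : ℝ) ≤ Fintype.linearCombination ℤ (vertexWeight p q) x := by
      exact_mod_cast three_le_linearCombination_vertexWeight hpJ hqI hx hxv
    have := Fintype.linearCombination_nonneg (fun k => (hw k).le) hr
    push_cast; linarith

theorem one_le_linearCombination_vertexWeight_of_mem_tangentGenerators (hpJ : p ∉ J)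
    (hqI : q ∉ I) :
    ∀ g ∈ tangentGenerators (productCloud I J) (Pi.single p 1 + Pi.single q 1),
      1 ≤ Fintype.linearCombination ℤ (vertexWeight p q) g := by
  rintro _ (⟨x, hx, hxv, rfl⟩ | ⟨k, rfl⟩)
  · have := three_le_linearCombination_vertexWeight hpJ hqI hx hxv
    rw [map_sub, linearCombination_vertexWeight_vertex]
    omega
  · rw [Fintype.linearCombination_apply_single, one_smul]
    exact one_le_vertexWeight k

theorem eq_zero_or_eq_zero_of_linearCombination_vertexWeight_eq_one (hpJ : p ∉ J)
    (hqI : q ∉ I) {t : ι → ℤ} (ht : Fintype.linearCombination ℤ (vertexWeight p q) t = 1) :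
    ∀ x ∈ idealTangentCone (productCloud I J) (Pi.single p 1 + Pi.single q 1),
    ∀ y ∈ idealTangentCone (productCloud I J) (Pi.single p 1 + Pi.single q 1),
      t = x + y → x = 0 ∨ y = 0 := fun _ hx _ hy hxy =>
  AddSubmonoid.eq_zero_or_eq_zero_of_map_add_eq_one
    (Fintype.linearCombination ℤ (vertexWeight p q)).toAddMonoidHom
    (one_le_linearCombination_vertexWeight_of_mem_tangentGenerators hpJ hqI) hx hy (hxy ▸ ht)

end ProductIdeal

/-- For coordinate ideals with index sets `I`, `J` such that `I ∩ J ≠ ∅`, `I ⊄ J`,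
`J ⊄ I`: if `p ∈ I \ J`, `q ∈ J \ I` and `c ∈ I ∩ J`, then `e_p + e_q` is a vertex of
the Newton polyhedron of the product, and both `e_c - e_p` and `e_c - e_q` are minimal
(irreducible) generators of the ideal tangent cone there; in particular the ideal
tangent cone is not simplicial. -/
theorem stmt_13 {n : ℕ} (I J : Finset (Fin n)) (p q c : Fin n)
    (hpI : p ∈ I) (hpJ : p ∉ J) (hqJ : q ∈ J) (hqI : q ∉ I) (hcI : c ∈ I) (hcJ : c ∈ J)
    (C : Set (Fin n → ℤ))
    (hC : C = {x | ∃ i ∈ I, ∃ j ∈ J, x = Pi.single i (1 : ℤ) + Pi.single j 1})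
    (v : Fin n → ℤ) (hv : v = Pi.single p 1 + Pi.single q 1)
    (IT : AddSubmonoid (Fin n → ℤ))
    (hIT : IT = AddSubmonoid.closure
      ({w | ∃ x ∈ C, x ≠ v ∧ w = x - v} ∪ Set.range (fun i => Pi.single i (1 : ℤ)))) :
    ((fun i => (v i : ℝ)) ∈ Set.extremePoints ℝ (convexHull ℝ
      ((fun (x : Fin n → ℤ) (i : Fin n) => (x i : ℝ)) '' C + {x : Fin n → ℝ | ∀ i, 0 ≤ x i})))
    ∧ (Pi.single c (1 : ℤ) - Pi.single p 1) ∈ IT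
    ∧ (Pi.single c (1 : ℤ) - Pi.single q 1) ∈ IT
    ∧ (∀ x ∈ IT, ∀ y ∈ IT, Pi.single c (1 : ℤ) - Pi.single p 1 = x + y → x = 0 ∨ y = 0)
    ∧ (∀ x ∈ IT, ∀ y ∈ IT, Pi.single c (1 : ℤ) - Pi.single q 1 = x + y → x = 0 ∨ y = 0) := by
  have hcp : c ≠ p := by rintro rfl; exact hpJ hcJ
  have hcq : c ≠ q := by rintro rfl; exact hqI hcI
  have hne {i j : Fin n} (hi : i ≠ c) (hj : j ≠ c) :
      (Pi.single c 1 + Pi.single j 1 : Fin n → ℤ) ≠ Pi.single i 1 + Pi.single j 1 := fun h => by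
    simpa [hi, hj, Ne.symm hi] using congrFun h c
  subst hC hv hIT
  refine ⟨vertex_mem_extremePoints_newtonPolyhedron hpI hqJ hpJ hqI, ?_, ?_,
    eq_zero_or_eq_zero_of_linearCombination_vertexWeight_eq_one hpJ hqI ?_,
    eq_zero_or_eq_zero_of_linearCombination_vertexWeight_eq_one hpJ hqI ?_⟩
  · rw [← add_sub_add_right_eq_sub _ _ (Pi.single q 1)]
    exact sub_mem_idealTangentCone ⟨c, hcI, q, hqJ, rfl⟩ (hne hcp.symm hcq.symm)
  · rw [← add_sub_add_left_eq_sub _ _ (Pi.single p 1), add_comm (Pi.single p 1),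
      add_comm (Pi.single p 1)]
    exact sub_mem_idealTangentCone ⟨p, hpI, c, hcJ, add_comm _ _⟩ (hne hcq.symm hcp.symm)
  all_goals simp [Fintype.linearCombination_apply_single, vertexWeight, hcp, hcq]
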